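/- arXiv:1407.4104 — 3 statements merged into one kernel-verified Lean document; each statement's English description precedes it below -/
import Mathlib

section
/- If a single-variable real polynomial P(x) = a_0 + a_1 x + ... + a_n x^n has all partial sums A_k = a_0 + a_1 + ... + a_k nonnegative for k = 0, 1, ..., n, then P(x) ≥ 0 for all x in the closed interval [0,1]. -/
lemma abel_sum (a : ℕ → ℝ) (x : ℝ) (n : ℕ) :
    ∑ i ∈ Finset.range (n + 1), a i * x ^ i =
      (∑ k ∈ Finset.range n,
        (∑ i ∈ Finset.range (k + 1), a i) * (x ^ k - x ^ (k + 1))) +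
      (∑ i ∈ Finset.range (n + 1), a i) * x ^ n := by
  induction n with
  | zero => simp
  | succ n ih =>
      rw [Finset.sum_range_succ, ih,
        Finset.sum_range_succ
          (fun k => (∑ i ∈ Finset.range (k + 1), a i) * (x ^ k - x ^ (k + 1))) n,
        Finset.sum_range_succ a (n + 1)]
      ring

/-- If all partial sums of the coefficients of a real polynomial are nonnegative
(weak positive dominance), then the polynomial is nonnegative on `[0,1]`. -/
theorem wpd_nonneg_on_unit_interval (P : Polynomial ℝ)
    (hWPD : ∀ k : ℕ, 0 ≤ ∑ i ∈ Finset.range (k + 1), P.coeff i) :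
    ∀ x ∈ Set.Icc (0 : ℝ) 1, 0 ≤ P.eval x := by
  intro x hx
  obtain ⟨hx0, hx1⟩ := hx
  rw [Polynomial.eval_eq_sum_range, abel_sum]
  have hpow : ∀ k : ℕ, 0 ≤ x ^ k := fun k => pow_nonneg hx0 k
  have hmono : ∀ k : ℕ, x ^ (k + 1) ≤ x ^ k := fun k => by
    calc x ^ (k + 1) = x ^ k * x := by ring
    _ ≤ x ^ k * 1 := by exact mul_le_mul_of_nonneg_left hx1 (hpow k)
    _ = x ^ k := by ring
  apply add_nonneg
  · exact Finset.sum_nonneg fun k _ =>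
      mul_nonneg (hWPD k) (sub_nonneg.mpr (hmono k))
  · exact mul_nonneg (hWPD _) (hpow _)
end

section
/- Let P be a real polynomial in k variables, written P = Σ_I A_I x^I over multi-indices I ∈ ℕ^k. If for every multi-index I the sum Σ_{I' ≤ I} A_{I'} is nonnegative (where I' ≤ I means componentwise inequality), then P ≥ 0 on the unit cube [0,1]^k. -/
lemma tele_sum (y : ℝ) (i N : ℕ) (h : i ≤ N) :
    ∑ m ∈ Finset.Ico i N, (y ^ m * (1 - y)) = y ^ i - y ^ N := by
  have hm : ∀ m, y ^ m * (1 - y) = y ^ m - y ^ (m + 1) := by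
    intro m; rw [pow_succ]; ring
  simp only [hm]
  induction N with
  | zero =>
    obtain rfl : i = 0 := Nat.le_zero.mp h
    simp
  | succ N ih =>
    rcases Nat.lt_or_ge i (N + 1) with hlt | hge
    · rw [Finset.sum_Ico_succ_top (by omega), ih (by omega)]; ring
    · have : i = N + 1 := by omega
      subst this; simp

/-- Multivariable weak positive dominance: if for every multi-index `I` the sum of
the coefficients over all multi-indices `I' ≤ I` (componentwise) is nonnegative,
then the polynomial is nonnegative on the unit cube `[0,1]^k`. -/
theorem mv_wpd_nonneg_on_unit_cube (k : ℕ) (P : MvPolynomial (Fin k) ℝ)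
    (hWPD : ∀ I : Fin k →₀ ℕ,
      0 ≤ ∑ I' ∈ P.support.filter (fun I' => I' ≤ I), P.coeff I') :
    ∀ x : Fin k → ℝ, (∀ i, x i ∈ Set.Icc (0 : ℝ) 1) →
      0 ≤ MvPolynomial.eval x P := by
  intro x hx
  classical
  set n : Fin k → ℕ := fun j => P.support.sup (fun I => I j) with hn
  set c : Fin k → ℕ → ℝ := fun j m =>
    if m ≤ n j then x j ^ m * (1 - x j) else x j ^ (n j + 1) with hc
  have hc_nonneg : ∀ j m, 0 ≤ c j m := by
    intro j m
    obtain ⟨h0, h1⟩ := hx j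
    simp only [hc]
    split
    · exact mul_nonneg (pow_nonneg h0 _) (by linarith)
    · exact pow_nonneg h0 _
  have key : ∀ j i, i ≤ n j →
      x j ^ i = ∑ m ∈ Finset.range (n j + 2), (if i ≤ m then c j m else 0) := by
    intro j i hi
    rw [← Finset.sum_filter]
    have hfil : (Finset.range (n j + 2)).filter (fun m => i ≤ m) = Finset.Ico i (n j + 2) := by
      ext m; simp [Finset.mem_filter, Finset.mem_range, Finset.mem_Ico, and_comm]
    rw [hfil, Finset.sum_Ico_succ_top (by omega)]
    have h1 : ∀ m ∈ Finset.Ico i (n j + 1), c j m = x j ^ m * (1 - x j) := by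
      intro m hm
      simp only [Finset.mem_Ico] at hm
      simp [hc, Nat.lt_succ_iff.mp hm.2]
    rw [Finset.sum_congr rfl h1, tele_sum _ _ _ (by omega)]
    have : c j (n j + 1) = x j ^ (n j + 1) := by simp [hc]
    rw [this]; ring
  have hbound : ∀ I ∈ P.support, ∀ j, I j ≤ n j := by
    intro I hI j
    exact Finset.le_sup (f := fun I => I j) hI
  rw [MvPolynomial.eval_eq']
  have step : ∀ I ∈ P.support, (∏ j, x j ^ I j)
      = ∑ M ∈ Fintype.piFinset (fun j => Finset.range (n j + 2)),
          ∏ j, (if I j ≤ M j then c j (M j) else 0) := by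
    intro I hI
    calc (∏ j, x j ^ I j)
        = ∏ j, ∑ m ∈ Finset.range (n j + 2), (if I j ≤ m then c j m else 0) :=
          Finset.prod_congr rfl fun j _ => key j (I j) (hbound I hI j)
      _ = _ := Finset.prod_univ_sum _ _
  rw [Finset.sum_congr rfl (fun I hI => by rw [step I hI])]
  simp only [Finset.mul_sum]
  rw [Finset.sum_comm]
  apply Finset.sum_nonneg
  intro M _
  have hprod : ∀ I : Fin k →₀ ℕ, (∏ j, (if I j ≤ M j then c j (M j) else 0))
      = if (∀ j, I j ≤ M j) then ∏ j, c j (M j) else 0 := by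
    intro I
    by_cases h : ∀ j, I j ≤ M j
    · rw [if_pos h]
      exact Finset.prod_congr rfl fun j _ => if_pos (h j)
    · push_neg at h
      obtain ⟨j, hj⟩ := h
      rw [if_neg (by push_neg; exact ⟨j, hj⟩)]
      exact Finset.prod_eq_zero (Finset.mem_univ j) (if_neg (by omega))
  have : ∑ I ∈ P.support, P.coeff I * ∏ j, (if I j ≤ M j then c j (M j) else 0)
      = (∑ I ∈ P.support.filter (fun I => ∀ j, I j ≤ M j), P.coeff I) * ∏ j, c j (M j) := by
    rw [Finset.sum_filter, Finset.sum_mul]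
    refine Finset.sum_congr rfl fun I _ => ?_
    rw [hprod I]
    by_cases h : ∀ j, I j ≤ M j <;> simp [h]
  rw [this]
  apply mul_nonneg
  · have := hWPD (Finsupp.equivFunOnFinite.symm M)
    have heq : P.support.filter (fun I => ∀ j, I j ≤ M j)
        = P.support.filter (fun I' => I' ≤ Finsupp.equivFunOnFinite.symm M) := by
      refine Finset.filter_congr fun I _ => ?_
      simp [Finsupp.le_def, Finsupp.equivFunOnFinite]
    rw [heq]; exact this
  · exact Finset.prod_nonneg fun j _ => hc_nonneg j (M j)
end

section
/- The normalized space X_24 of pseudo-tetrahedra (nonnegative labelings of the edges of K_4 satisfying the triangle inequality around every 3-cycle, with coordinate sum 24) equals the convex hull of the seven points A_1=(0,6,6,6,6,0), A_2=(6,0,6,6,0,6), A_3=(6,6,0,0,6,6), B_1=(8,8,8,0,0,0), B_2=(8,0,0,8,8,0), B_3=(0,8,0,8,0,8), B_4=(0,0,8,0,8,8) in ℝ^6. -/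
/-- A pseudo-tetrahedron: a nonnegative labeling `(d₁₂,d₁₃,d₁₄,d₂₃,d₂₄,d₃₄)` of the
edges of `K₄` satisfying the triangle inequality around each of the four 3-cycles. -/
def IsPseudoTet (d : Fin 6 → ℝ) : Prop :=
  (∀ i, 0 ≤ d i) ∧
  (d 0 ≤ d 1 + d 3 ∧ d 1 ≤ d 0 + d 3 ∧ d 3 ≤ d 0 + d 1) ∧
  (d 0 ≤ d 2 + d 4 ∧ d 2 ≤ d 0 + d 4 ∧ d 4 ≤ d 0 + d 2) ∧
  (d 1 ≤ d 2 + d 5 ∧ d 2 ≤ d 1 + d 5 ∧ d 5 ≤ d 1 + d 2) ∧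
  (d 3 ≤ d 4 + d 5 ∧ d 4 ≤ d 3 + d 5 ∧ d 5 ≤ d 3 + d 4)


private lemma cons_val_five' {α : Type*} {m : ℕ} (x : α) (u : Fin (m+5) → α) :
    Matrix.vecCons x u 5 =
      Matrix.vecHead (Matrix.vecTail (Matrix.vecTail (Matrix.vecTail (Matrix.vecTail u)))) := rfl

private lemma cons_val_six' {α : Type*} {m : ℕ} (x : α) (u : Fin (m+6) → α) :
    Matrix.vecCons x u 6 =
      Matrix.vecHead (Matrix.vecTail (Matrix.vecTail (Matrix.vecTail
        (Matrix.vecTail (Matrix.vecTail u))))) := rfl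

set_option maxHeartbeats 2000000 in
/-- The normalized space `X₂₄` of pseudo-tetrahedra with coordinate sum `24` is the
convex hull of the seven extrema `A₁, A₂, A₃, B₁, B₂, B₃, B₄`. -/
theorem X24_eq_convexHull_extrema :
    {d : Fin 6 → ℝ | IsPseudoTet d ∧ ∑ i, d i = 24} =
      convexHull ℝ
        {![0,6,6,6,6,0], ![6,0,6,6,0,6], ![6,6,0,0,6,6],
          ![8,8,8,0,0,0], ![8,0,0,8,8,0], ![0,8,0,8,0,8], ![0,0,8,0,8,8]} := by
  apply Set.Subset.antisymm
  · -- forward: every pseudo-tetrahedron is a convex combination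
    rintro d ⟨⟨hnn, ⟨h1a, h1b, h1c⟩, ⟨h2a, h2b, h2c⟩, ⟨h3a, h3b, h3c⟩, ⟨h4a, h4b, h4c⟩⟩, hsum⟩
    rw [Fin.sum_univ_six] at hsum
    set e1 : ℝ := (- d 0 + d 5 - d 1 + d 4 - d 2 + d 3) / 8 with he1
    set e2 : ℝ := (- d 0 + d 5 + d 1 - d 4 + d 2 - d 3) / 8 with he2
    set e3 : ℝ := (d 0 - d 5 - d 1 + d 4 + d 2 - d 3) / 8 with he3
    set e4 : ℝ := (d 0 - d 5 + d 1 - d 4 - d 2 + d 3) / 8 with he4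
    set B : ℝ := max (max e1 e2) (max e3 e4) with hB
    have hBe1 : e1 ≤ B := le_max_of_le_left (le_max_left _ _)
    have hBe2 : e2 ≤ B := le_max_of_le_left (le_max_right _ _)
    have hBe3 : e3 ≤ B := le_max_of_le_right (le_max_left _ _)
    have hBe4 : e4 ≤ B := le_max_of_le_right (le_max_right _ _)
    have hBub1 : B ≤ 3 - (d 0 + d 5) / 4 := by
      simp only [hB, max_le_iff, he1, he2, he3, he4]
      refine ⟨⟨?_, ?_⟩, ?_, ?_⟩ <;> linarith
    have hBub2 : B ≤ 3 - (d 1 + d 4) / 4 := by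
      simp only [hB, max_le_iff, he1, he2, he3, he4]
      refine ⟨⟨?_, ?_⟩, ?_, ?_⟩ <;> linarith
    have hBub3 : B ≤ 3 - (d 2 + d 3) / 4 := by
      simp only [hB, max_le_iff, he1, he2, he3, he4]
      refine ⟨⟨?_, ?_⟩, ?_, ?_⟩ <;> linarith
    refine mem_convexHull_of_exists_fintype
      (![1 - B/3 - (d 0 + d 5)/12, 1 - B/3 - (d 1 + d 4)/12, 1 - B/3 - (d 2 + d 3)/12,
        (B - e1)/4, (B - e2)/4, (B - e3)/4, (B - e4)/4] : Fin 7 → ℝ)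
      (![![0,6,6,6,6,0], ![6,0,6,6,0,6], ![6,6,0,0,6,6],
        ![8,8,8,0,0,0], ![8,0,0,8,8,0], ![0,8,0,8,0,8], ![0,0,8,0,8,8]] :
        Fin 7 → (Fin 6 → ℝ)) ?_ ?_ ?_ ?_
    · intro i
      fin_cases i <;>
        simp only [Fin.reduceFinMk, Matrix.cons_val_zero, Matrix.cons_val_one, Matrix.cons_val_two,
          Matrix.cons_val_three, Matrix.cons_val_four, cons_val_five', cons_val_six',
          Matrix.head_cons, Matrix.tail_cons, Fin.isValue] <;>
        linarith
    · simp only [Fin.sum_univ_seven, Fin.reduceFinMk, Matrix.cons_val_zero, Matrix.cons_val_one,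
        Matrix.cons_val_two, Matrix.cons_val_three, Matrix.cons_val_four, cons_val_five',
        cons_val_six', Matrix.head_cons, Matrix.tail_cons, Fin.isValue]
      linarith
    · intro i
      fin_cases i <;>
        simp only [Fin.reduceFinMk, Matrix.cons_val_zero, Matrix.cons_val_one, Matrix.cons_val_two,
          Matrix.cons_val_three, Matrix.cons_val_four, cons_val_five', cons_val_six',
          Matrix.head_cons, Matrix.tail_cons, Set.mem_insert_iff, Set.mem_singleton_iff,
          Fin.isValue] <;>
        tauto
    · funext j
      fin_cases j <;>
        simp only [Fin.sum_univ_seven, Finset.sum_apply, Pi.smul_apply, smul_eq_mul,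
          Fin.reduceFinMk, Matrix.cons_val_zero, Matrix.cons_val_one, Matrix.cons_val_two,
          Matrix.cons_val_three, Matrix.cons_val_four, cons_val_five', cons_val_six',
          Matrix.head_cons, Matrix.tail_cons, Fin.isValue] <;>
        linarith
  · -- reverse: the hull is contained in the set
    apply convexHull_min
    · intro x hx
      simp only [Set.mem_insert_iff, Set.mem_singleton_iff] at hx
      rcases hx with rfl | rfl | rfl | rfl | rfl | rfl | rfl <;>
        refine ⟨⟨fun i => by
            fin_cases i <;>
              norm_num [Fin.reduceFinMk, Matrix.cons_val_zero, Matrix.cons_val_one, Matrix.cons_val_two,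
                Matrix.cons_val_three, Matrix.cons_val_four, cons_val_five'], ?_, ?_, ?_, ?_⟩,
          ?_⟩ <;>
        norm_num [Fin.sum_univ_six, Fin.reduceFinMk, Matrix.cons_val_zero, Matrix.cons_val_one,
          Matrix.cons_val_two, Matrix.cons_val_three, Matrix.cons_val_four, cons_val_five']
    · rintro x ⟨⟨hxn, ⟨hx1a, hx1b, hx1c⟩, ⟨hx2a, hx2b, hx2c⟩, ⟨hx3a, hx3b, hx3c⟩,
        ⟨hx4a, hx4b, hx4c⟩⟩, hxs⟩
        y ⟨⟨hyn, ⟨hy1a, hy1b, hy1c⟩, ⟨hy2a, hy2b, hy2c⟩, ⟨hy3a, hy3b, hy3c⟩,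
        ⟨hy4a, hy4b, hy4c⟩⟩, hys⟩ a b ha hb hab
      rw [Fin.sum_univ_six] at hxs hys
      have key : ∀ (p q r s t u : ℝ), p ≤ q + r → s ≤ t + u →
          a * p + b * s ≤ (a * q + b * t) + (a * r + b * u) := by
        intro p q r s t u h1 h2
        nlinarith [mul_le_mul_of_nonneg_left h1 ha, mul_le_mul_of_nonneg_left h2 hb]
      refine ⟨⟨fun i => ?_, ⟨?_, ?_, ?_⟩, ⟨?_, ?_, ?_⟩, ⟨?_, ?_, ?_⟩, ⟨?_, ?_, ?_⟩⟩, ?_⟩ <;>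
        simp only [Pi.add_apply, Pi.smul_apply, smul_eq_mul]
      · exact add_nonneg (mul_nonneg ha (hxn i)) (mul_nonneg hb (hyn i))
      · exact key _ _ _ _ _ _ hx1a hy1a
      · exact key _ _ _ _ _ _ hx1b hy1b
      · exact key _ _ _ _ _ _ hx1c hy1c
      · exact key _ _ _ _ _ _ hx2a hy2a
      · exact key _ _ _ _ _ _ hx2b hy2b
      · exact key _ _ _ _ _ _ hx2c hy2c
      · exact key _ _ _ _ _ _ hx3a hy3a
      · exact key _ _ _ _ _ _ hx3b hy3b
      · exact key _ _ _ _ _ _ hx3c hy3c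
      · exact key _ _ _ _ _ _ hx4a hy4a
      · exact key _ _ _ _ _ _ hx4b hy4b
      · exact key _ _ _ _ _ _ hx4c hy4c
      · simp only [Fin.sum_univ_six]
        nlinarith [hxs, hys, hab]
end
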